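/- Let G = ℤ² ⋊_A ℤ where A ∈ SL₂(ℤ) with |tr(A)| > 2. Then the subgroup ℤ² has upper exponential distortion in G: there exists c > 0 such that for every w ∈ ℤ², the word length of w in G satisfies |w|_G ≤ c·log(|w|_{ℤ²} + 1) + c. -/

import Mathlib

/-- Word length of `g` with respect to a generating set `S`. -/
noncomputable def wordLength {G : Type*} [Group G] (S : Set G) (g : G) : ℕ :=
  sInf {n : ℕ | ∃ l : List G, (∀ x ∈ l, x ∈ S) ∧ l.length = n ∧ l.prod = g}

/-- `ℤ²`, written multiplicatively. -/
abbrev Z2 := Multiplicative (Fin 2 → ℤ)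

/-- The action of `ℤ` on `ℤ²` in which the generator acts by `A ∈ SL₂(ℤ)`. -/
noncomputable def sdAction (A : Matrix.SpecialLinearGroup (Fin 2) ℤ) :
    Multiplicative ℤ →* MulAut Z2 :=
  zpowersHom (MulAut Z2)
    (AddEquiv.toMultiplicative (Matrix.SpecialLinearGroup.toLin' A).toAddEquiv)

/-- The semidirect product `G = ℤ² ⋊_A ℤ`. -/
noncomputable abbrev SolLike (A : Matrix.SpecialLinearGroup (Fin 2) ℤ) :=
  SemidirectProduct Z2 (Multiplicative ℤ) (sdAction A)

/-- The standard basis elements `b₁, b₂` of `ℤ²` inside `G`. -/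
noncomputable def bGen (A : Matrix.SpecialLinearGroup (Fin 2) ℤ) (i : Fin 2) : SolLike A :=
  SemidirectProduct.inl (Multiplicative.ofAdd (Pi.single i 1))

/-- The generator `z` of the `ℤ`-factor of `G`. -/
noncomputable def zGen (A : Matrix.SpecialLinearGroup (Fin 2) ℤ) : SolLike A :=
  SemidirectProduct.inr (Multiplicative.ofAdd 1)


/-!
Put `B = A²`, so that `T = tr B = (tr A)² - 2 ≥ 7`, and `τ k = tr (B ^ k)`. Conjugation by
`z^{±2}` acts on `ℤ²` by `B^{±1}`, and `B ^ k + B ^ (-k) = τ k • 1` in `SL₂`. Hence for integer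
digits `c k` the element `b_i ^ (∑ c k * τ k)` is the product of two Horner-type words
`b_i^{c 0} z² b_i^{c 1} z² ⋯ z^{-2(m-1)}`, one for `z²` and one for `z⁻²`, each of length
`∑ |c k| + 4 m`. The traces satisfy `τ (k + 2) + τ k = T * τ (k + 1)`, hence
`2 ^ (k + 1) ≤ τ k` and `τ (k + 1) ≤ T * τ k`, so every `|n| < τ m` has a greedy expansion
`n = r + ∑_{k < m} c k * τ k` with `|c k| ≤ T` and `|r| ≤ 1`. Since `|w|_{ℤ²}` bounds both
coordinates of `w`, taking `m = log₂ |w|_{ℤ²}` gives `|w|_G = O(T log |w|_{ℤ²})`.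
-/

open Finset SemidirectProduct Multiplicative

def IsProdOfAtMost {G : Type*} [Monoid G] (S : Set G) (n : ℕ) (g : G) : Prop :=
  ∃ l : List G, (∀ x ∈ l, x ∈ S) ∧ l.length ≤ n ∧ l.prod = g

namespace IsProdOfAtMost

section Monoid

variable {G : Type*} [Monoid G] {S : Set G} {m n : ℕ} {g h : G}

theorem one : IsProdOfAtMost S 0 (1 : G) := ⟨[], by simp, le_rfl, rfl⟩

theorem of_mem (hg : g ∈ S) : IsProdOfAtMost S 1 g := ⟨[g], by simpa using hg, le_rfl, by simp⟩

theorem mono (hg : IsProdOfAtMost S m g) (hmn : m ≤ n) : IsProdOfAtMost S n g :=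
  let ⟨l, hS, hl, hprod⟩ := hg
  ⟨l, hS, hl.trans hmn, hprod⟩

theorem mul (hg : IsProdOfAtMost S m g) (hh : IsProdOfAtMost S n h) :
    IsProdOfAtMost S (m + n) (g * h) := by
  obtain ⟨l, hlS, hl, rfl⟩ := hg
  obtain ⟨l', hlS', hl', rfl⟩ := hh
  refine ⟨l ++ l', ?_, ?_, List.prod_append⟩
  · simpa [or_imp, forall_and] using ⟨hlS, hlS'⟩
  · simpa using add_le_add hl hl'

theorem pow (hg : IsProdOfAtMost S m g) (k : ℕ) : IsProdOfAtMost S (m * k) (g ^ k) := by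
  induction k with
  | zero => simpa using one
  | succ k ih => simpa [pow_succ, mul_add] using ih.mul hg

end Monoid

variable {G : Type*} [Group G] {S : Set G} {m n : ℕ} {g : G}

theorem zpow (hg : IsProdOfAtMost S m g) (hg' : IsProdOfAtMost S m g⁻¹) (k : ℤ) :
    IsProdOfAtMost S (m * k.natAbs) (g ^ k) := by
  obtain ⟨k, rfl | rfl⟩ := Int.eq_nat_or_neg k
  · simpa using hg.pow k
  · simpa using hg'.pow k

theorem wordLength_le (hg : IsProdOfAtMost S n g) : wordLength S g ≤ n := by
  obtain ⟨l, hS, hl, hprod⟩ := hg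
  exact (Nat.sInf_le (s := {n | ∃ l : List G, (∀ x ∈ l, x ∈ S) ∧ l.length = n ∧ l.prod = g})
    ⟨l, hS, rfl, hprod⟩).trans hl

end IsProdOfAtMost

theorem abs_le_wordLength {G : Type*} [Group G] {S : Set G} {g : G} {n : ℕ}
    (f : G →* Multiplicative ℤ) (hS : ∀ s ∈ S, |(f s).toAdd| ≤ 1)
    (hg : IsProdOfAtMost S n g) : |(f g).toAdd| ≤ wordLength S g := by
  obtain ⟨l, hlS, -, hprod⟩ := hg
  obtain ⟨l, hlS, hl, rfl⟩ := Nat.sInf_mem (⟨l.length, l, hlS, rfl, hprod⟩ :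
    {n | ∃ l : List G, (∀ x ∈ l, x ∈ S) ∧ l.length = n ∧ l.prod = g}.Nonempty)
  rw [wordLength, ← hl]
  clear hl hprod
  induction l with
  | nil => simp
  | cons x l ih =>
    simp only [List.mem_cons, forall_eq_or_imp] at hlS
    rw [List.prod_cons, map_mul, toAdd_mul, List.length_cons, Nat.cast_succ]
    exact (abs_add_le _ _).trans (by linarith [hS x hlS.1, ih hlS.2])

/-- The ordered product `∏_{k < m} x ^ k * g ^ c k * x⁻¹ ^ k`, nested Horner-style so that it is
a word of length `∑ |c k| + 2 m |x|` rather than `∑ (|c k| + 2 k |x|)`. -/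
def conjHorner {G : Type*} [Group G] (x g : G) (c : ℕ → ℤ) : ℕ → G
  | 0 => 1
  | m + 1 => g ^ c 0 * (x * conjHorner x g (fun k => c (k + 1)) m * x⁻¹)

theorem isProdOfAtMost_conjHorner {G : Type*} [Group G] {S : Set G} {x g : G} {b : ℕ}
    (hg : g ∈ S) (hg' : g⁻¹ ∈ S) (hx : IsProdOfAtMost S b x) (hx' : IsProdOfAtMost S b x⁻¹)
    (c : ℕ → ℤ) (m : ℕ) :
    IsProdOfAtMost S (∑ k ∈ range m, (c k).natAbs + 2 * b * m) (conjHorner x g c m) := by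
  induction m generalizing c with
  | zero => simpa [conjHorner] using IsProdOfAtMost.one
  | succ m ih =>
    have h := ((IsProdOfAtMost.of_mem hg).zpow (.of_mem hg') (c 0)).mul
      ((hx.mul (ih fun k => c (k + 1))).mul hx')
    refine h.mono ?_
    rw [sum_range_succ']
    linarith

theorem SemidirectProduct.conjHorner_inr_inl {N H : Type*} [CommGroup N] [Group H]
    {φ : H →* MulAut N} (h : H) (n : N) (c : ℕ → ℤ) (m : ℕ) :
    conjHorner (inr h) (inl n) c m = (inl (∏ k ∈ range m, φ (h ^ k) (n ^ c k)) : N ⋊[φ] H) := by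
  induction m generalizing c with
  | zero => simp [conjHorner]
  | succ m ih =>
    rw [conjHorner, ih, ← map_inv, ← inl_aut, ← map_zpow, ← map_mul, prod_range_succ', map_prod,
      mul_comm]
    simp [pow_succ']

theorem exists_digits_of_abs_lt {u : ℕ → ℤ} {T : ℤ} (hpos : ∀ k, 0 < u k)
    (hsucc : ∀ k, u (k + 1) ≤ T * u k) (m : ℕ) {n : ℤ} (hn : |n| < u m) :
    ∃ (r : ℤ) (c : ℕ → ℤ), |r| < u 0 ∧ (∀ k < m, |c k| ≤ T) ∧
      n = r + ∑ k ∈ range m, c k * u k := by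
  induction m generalizing n with
  | zero => exact ⟨n, 0, hn, by simp, by simp⟩
  | succ m ih =>
    have hum := hpos m
    have hnT := abs_lt.mp (hn.trans_le (hsucc m))
    obtain ⟨r, c, hr, hc, hrc⟩ := ih (n := n % u m) (by
      rw [abs_of_nonneg (Int.emod_nonneg _ hum.ne')]
      exact Int.emod_lt_of_pos _ hum)
    refine ⟨r, Function.update c m (n / u m), hr, fun k hk => ?_, ?_⟩
    · rcases (Nat.lt_succ_iff.mp hk).lt_or_eq with hk | rfl
      · simpa [hk.ne] using hc k hk
      · rw [Function.update_self, abs_le, Int.le_ediv_iff_mul_le hum, Int.ediv_le_iff_le_mul hum]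
        constructor <;> linarith
    · have hlow : ∑ k ∈ range m, Function.update c m (n / u m) k * u k
          = ∑ k ∈ range m, c k * u k :=
        sum_congr rfl fun k hk => by rw [Function.update_of_ne (mem_range.mp hk).ne]
      rw [sum_range_succ, Function.update_self, hlow]
      linarith [Int.emod_add_mul_ediv n (u m)]

namespace Matrix.SpecialLinearGroup

variable {R : Type*} [CommRing R]

theorem coe_add_coe_inv_fin_two (B : SpecialLinearGroup (Fin 2) R) :
    (B : Matrix (Fin 2) (Fin 2) R) + ↑B⁻¹ = trace (B : Matrix (Fin 2) (Fin 2) R) • 1 := by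
  rw [coe_inv, adjugate_fin_two]
  ext i j
  fin_cases i <;> fin_cases j <;> simp [trace_fin_two, add_comm]

theorem smul_add_inv_smul_fin_two (B : SpecialLinearGroup (Fin 2) R) (w : Fin 2 → R) :
    B • w + B⁻¹ • w = trace (B : Matrix (Fin 2) (Fin 2) R) • w := by
  simp only [SpecialLinearGroup.smul_def, ← add_smul, coe_add_coe_inv_fin_two, smul_assoc,
    one_smul]

theorem trace_pow_add_two_add_trace_pow (B : SpecialLinearGroup (Fin 2) R) (k : ℕ) :
    trace (↑(B ^ (k + 2)) : Matrix (Fin 2) (Fin 2) R)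
        + trace (↑(B ^ k) : Matrix (Fin 2) (Fin 2) R)
      = trace (B : Matrix (Fin 2) (Fin 2) R)
        * trace (↑(B ^ (k + 1)) : Matrix (Fin 2) (Fin 2) R) := by
  have h := congrArg (fun M => trace ((↑(B ^ (k + 1)) : Matrix (Fin 2) (Fin 2) R) * M))
    (coe_add_coe_inv_fin_two B)
  have hk : B ^ (k + 1) * B⁻¹ = B ^ k := by rw [pow_succ, mul_inv_cancel_right]
  simp only [mul_add, ← coe_mul, ← pow_succ, hk] at h
  simpa only [Matrix.mul_smul, mul_one, trace_add, trace_smul, smul_eq_mul] using h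

theorem trace_sq_fin_two (B : SpecialLinearGroup (Fin 2) R) :
    trace (↑(B ^ 2) : Matrix (Fin 2) (Fin 2) R) = trace (B : Matrix (Fin 2) (Fin 2) R) ^ 2 - 2 := by
  have h := trace_pow_add_two_add_trace_pow B 0
  simp only [zero_add, pow_zero, pow_one, coe_one, trace_one, Fintype.card_fin] at h
  push_cast at h
  linear_combination h

variable [LinearOrder R] [IsStrictOrderedRing R]

theorem trace_pow_pos_and_two_mul_le (B : SpecialLinearGroup (Fin 2) R)
    (hB : 4 ≤ trace (B : Matrix (Fin 2) (Fin 2) R)) (k : ℕ) :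
    0 < trace (↑(B ^ k) : Matrix (Fin 2) (Fin 2) R) ∧
      2 * trace (↑(B ^ k) : Matrix (Fin 2) (Fin 2) R)
        ≤ trace (↑(B ^ (k + 1)) : Matrix (Fin 2) (Fin 2) R) := by
  induction k with
  | zero =>
    simp only [pow_zero, zero_add, pow_one, coe_one, trace_one, Fintype.card_fin, Nat.cast_ofNat]
    exact ⟨two_pos, by linarith⟩
  | succ k ih =>
    have := trace_pow_add_two_add_trace_pow B k
    constructor <;> nlinarith

theorem trace_pow_succ_le (B : SpecialLinearGroup (Fin 2) R)
    (hB : 4 ≤ trace (B : Matrix (Fin 2) (Fin 2) R)) (k : ℕ) :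
    trace (↑(B ^ (k + 1)) : Matrix (Fin 2) (Fin 2) R)
      ≤ trace (B : Matrix (Fin 2) (Fin 2) R) * trace (↑(B ^ k) : Matrix (Fin 2) (Fin 2) R) := by
  cases k with
  | zero =>
    simp only [zero_add, pow_one, pow_zero, coe_one, trace_one, Fintype.card_fin, Nat.cast_ofNat]
    linarith
  | succ k =>
    have := trace_pow_add_two_add_trace_pow B k
    linarith [(trace_pow_pos_and_two_mul_le B hB k).1]

theorem two_pow_succ_le_trace_pow (B : SpecialLinearGroup (Fin 2) R)
    (hB : 4 ≤ trace (B : Matrix (Fin 2) (Fin 2) R)) (k : ℕ) :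
    2 ^ (k + 1) ≤ trace (↑(B ^ k) : Matrix (Fin 2) (Fin 2) R) := by
  induction k with
  | zero => simp
  | succ k ih => rw [pow_succ]; linarith [(trace_pow_pos_and_two_mul_le B hB k).2]

end Matrix.SpecialLinearGroup

open Matrix (SpecialLinearGroup)

theorem four_le_trace_sq (A : SpecialLinearGroup (Fin 2) ℤ)
    (htr : 2 < |Matrix.trace (A : Matrix (Fin 2) (Fin 2) ℤ)|) :
    4 ≤ Matrix.trace (↑(A ^ 2) : Matrix (Fin 2) (Fin 2) ℤ) := by
  rw [Matrix.SpecialLinearGroup.trace_sq_fin_two]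
  nlinarith [sq_abs (Matrix.trace (A : Matrix (Fin 2) (Fin 2) ℤ))]

theorem sdAction_apply (A : SpecialLinearGroup (Fin 2) ℤ) (h : Multiplicative ℤ) (w : Z2) :
    sdAction A h w = ofAdd ((A ^ h.toAdd) • w.toAdd) := by
  induction h using Multiplicative.rec with | ofAdd j =>
  induction j using Int.induction_on generalizing w with
  | zero => simp [sdAction]
  | succ k ih =>
    rw [toAdd_ofAdd, _root_.zpow_add_one, mul_smul, ofAdd_add, map_mul, MulAut.mul_apply, ih,
      toAdd_ofAdd]
    rfl
  | pred k ih =>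
    rw [toAdd_ofAdd, _root_.zpow_sub_one, mul_smul, ofAdd_sub, map_div, div_eq_mul_inv,
      MulAut.mul_apply, ih, toAdd_ofAdd]
    rfl

theorem conjHorner_inr_ofAdd_inl_ofAdd (A : SpecialLinearGroup (Fin 2) ℤ) (j : ℤ)
    (e : Fin 2 → ℤ) (c : ℕ → ℤ) (m : ℕ) :
    conjHorner (inr (ofAdd j) : SolLike A) (inl (ofAdd e)) c m
      = inl (ofAdd (∑ k ∈ range m, c k • (A ^ j) ^ k • e)) := by
  rw [conjHorner_inr_inl, ofAdd_sum]
  refine congrArg inl (prod_congr rfl fun k _ => ?_)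
  rw [sdAction_apply, toAdd_pow, toAdd_ofAdd, toAdd_zpow, toAdd_ofAdd, smul_comm, nsmul_eq_mul,
    mul_comm, zpow_mul, zpow_natCast]

def solGens (A : SpecialLinearGroup (Fin 2) ℤ) : Set (SolLike A) :=
  {bGen A 0, (bGen A 0)⁻¹, bGen A 1, (bGen A 1)⁻¹, zGen A, (zGen A)⁻¹}

theorem isProdOfAtMost_inr_ofAdd_two (A : SpecialLinearGroup (Fin 2) ℤ) :
    IsProdOfAtMost (solGens A) 2 (inr (ofAdd 2)) ∧
      IsProdOfAtMost (solGens A) 2 (inr (ofAdd 2))⁻¹ := by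
  have hz : (inr (ofAdd 2) : SolLike A) = zGen A * zGen A := by rw [zGen, ← map_mul]; rfl
  rw [hz, mul_inv_rev]
  exact ⟨(IsProdOfAtMost.of_mem (by simp [solGens])).mul (.of_mem (by simp [solGens])),
    (IsProdOfAtMost.of_mem (by simp [solGens])).mul (.of_mem (by simp [solGens]))⟩

theorem isProdOfAtMost_inl_ofAdd_smul_single (A : SpecialLinearGroup (Fin 2) ℤ) (i : Fin 2)
    (r : ℤ) (c : ℕ → ℤ) (m : ℕ) :
    IsProdOfAtMost (solGens A) (r.natAbs + 2 * (∑ k ∈ range m, (c k).natAbs + 4 * m))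
      (inl (ofAdd ((r + ∑ k ∈ range m,
        c k * Matrix.trace (↑((A ^ 2) ^ k) : Matrix (Fin 2) (Fin 2) ℤ)) • Pi.single i 1))) := by
  have hgen : bGen A i ∈ solGens A ∧ (bGen A i)⁻¹ ∈ solGens A := by
    fin_cases i <;> simp [solGens]
  obtain ⟨hx, hx'⟩ := isProdOfAtMost_inr_ofAdd_two A
  have hword : (inl (ofAdd ((r + ∑ k ∈ range m,
        c k * Matrix.trace (↑((A ^ 2) ^ k) : Matrix (Fin 2) (Fin 2) ℤ)) • Pi.single i 1)) :
          SolLike A)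
      = bGen A i ^ r * conjHorner (inr (ofAdd 2)) (bGen A i) c m
        * conjHorner (inr (ofAdd 2))⁻¹ (bGen A i) c m := by
    rw [← map_inv, ← ofAdd_neg, bGen, conjHorner_inr_ofAdd_inl_ofAdd,
      conjHorner_inr_ofAdd_inl_ofAdd, ← map_zpow, ← map_mul, ← map_mul, ← ofAdd_zsmul, ← ofAdd_add,
      ← ofAdd_add, add_assoc, ← sum_add_distrib, add_smul, sum_smul]
    congr 3
    refine sum_congr rfl fun k _ => ?_
    rw [← smul_add, zpow_neg, inv_pow, zpow_ofNat,
      Matrix.SpecialLinearGroup.smul_add_inv_smul_fin_two, mul_smul]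
  rw [hword]
  refine ((((IsProdOfAtMost.of_mem hgen.1).zpow (.of_mem hgen.2) r).mul
    (isProdOfAtMost_conjHorner hgen.1 hgen.2 hx hx' c m)).mul
    (isProdOfAtMost_conjHorner hgen.1 hgen.2 hx' (by rwa [inv_inv]) c m)).mono ?_
  omega

theorem isProdOfAtMost_inl_ofAdd_smul_single_of_abs_lt (A : SpecialLinearGroup (Fin 2) ℤ)
    (htr : 2 < |Matrix.trace (A : Matrix (Fin 2) (Fin 2) ℤ)|) (i : Fin 2) {n : ℤ} {m : ℕ}
    (hn : |n| < Matrix.trace (↑((A ^ 2) ^ m) : Matrix (Fin 2) (Fin 2) ℤ)) :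
    IsProdOfAtMost (solGens A)
      (1 + 2 * m * ((Matrix.trace (↑(A ^ 2) : Matrix (Fin 2) (Fin 2) ℤ)).natAbs + 4))
      (inl (ofAdd (n • Pi.single i 1))) := by
  set T := Matrix.trace (↑(A ^ 2) : Matrix (Fin 2) (Fin 2) ℤ)
  have hT : 4 ≤ T := four_le_trace_sq A htr
  obtain ⟨r, c, hr, hc, rfl⟩ := exists_digits_of_abs_lt
    (Matrix.SpecialLinearGroup.trace_pow_pos_and_two_mul_le _ hT · |>.1)
    (Matrix.SpecialLinearGroup.trace_pow_succ_le _ hT) m hn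
  have hr1 : r.natAbs ≤ 1 := by
    simp only [pow_zero, Matrix.SpecialLinearGroup.coe_one, Matrix.trace_one, Fintype.card_fin,
      Int.abs_eq_natAbs] at hr
    omega
  have hsum : ∑ k ∈ range m, (c k).natAbs ≤ m * T.natAbs := by
    refine (sum_le_card_nsmul (range m) _ T.natAbs fun k hk => ?_).trans_eq (by simp)
    have := hc k (mem_range.mp hk)
    rw [Int.abs_eq_natAbs] at this
    omega
  refine (isProdOfAtMost_inl_ofAdd_smul_single A i r c m).mono ?_
  nlinarith

def z2Gens : Set Z2 :=
  {ofAdd (Pi.single 0 1), (ofAdd (Pi.single 0 1))⁻¹, ofAdd (Pi.single 1 1),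
    (ofAdd (Pi.single 1 1))⁻¹}

theorem ofAdd_eq_ofAdd_smul_single_mul (v : Fin 2 → ℤ) :
    ofAdd v = ofAdd (v 0 • Pi.single 0 1) * ofAdd (v 1 • Pi.single 1 1) := by
  rw [← ofAdd_add]
  congr 1
  ext j
  fin_cases j <;> simp

theorem abs_apply_le_wordLength_z2Gens (v : Fin 2 → ℤ) (i : Fin 2) :
    |v i| ≤ wordLength z2Gens (ofAdd v) := by
  have hv : IsProdOfAtMost z2Gens ((v 0).natAbs + (v 1).natAbs) (ofAdd v) := by
    rw [ofAdd_eq_ofAdd_smul_single_mul, ofAdd_zsmul, ofAdd_zsmul]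
    simpa using
      ((IsProdOfAtMost.of_mem (by simp [z2Gens])).zpow (.of_mem (by simp [z2Gens])) (v 0)).mul
        ((IsProdOfAtMost.of_mem (by simp [z2Gens])).zpow (.of_mem (by simp [z2Gens])) (v 1))
  refine abs_le_wordLength (Pi.evalAddMonoidHom (fun _ => ℤ) i).toMultiplicative ?_ hv
  intro s hs
  simp only [z2Gens, Set.mem_insert_iff, Set.mem_singleton_iff] at hs
  rcases hs with rfl | rfl | rfl | rfl <;> fin_cases i <;> simp

theorem wordLength_solGens_inl_le (A : SpecialLinearGroup (Fin 2) ℤ)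
    (htr : 2 < |Matrix.trace (A : Matrix (Fin 2) (Fin 2) ℤ)|) (v : Fin 2 → ℤ) :
    wordLength (solGens A) (inl (ofAdd v))
      ≤ (4 * (Matrix.trace (↑(A ^ 2) : Matrix (Fin 2) (Fin 2) ℤ)).natAbs + 18)
        * (Nat.log 2 (wordLength z2Gens (ofAdd v)) + 1) := by
  set L := wordLength z2Gens (ofAdd v)
  set m := Nat.log 2 L
  have hcoord (i : Fin 2) : |v i| < Matrix.trace (↑((A ^ 2) ^ m) : Matrix (Fin 2) (Fin 2) ℤ) :=
    calc |v i| ≤ L := abs_apply_le_wordLength_z2Gens v i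
      _ < 2 ^ (m + 1) := by exact_mod_cast Nat.lt_pow_succ_log_self one_lt_two L
      _ ≤ _ := Matrix.SpecialLinearGroup.two_pow_succ_le_trace_pow _ (four_le_trace_sq A htr) m
  have h0 := isProdOfAtMost_inl_ofAdd_smul_single_of_abs_lt A htr 0 (hcoord 0)
  have h1 := isProdOfAtMost_inl_ofAdd_smul_single_of_abs_lt A htr 1 (hcoord 1)
  rw [ofAdd_eq_ofAdd_smul_single_mul, map_mul]
  exact ((h0.mul h1).mono (by ring_nf; omega)).wordLength_le

theorem natLog_two_mul_log_two_le_log_succ (L : ℕ) :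
    (Nat.log 2 L : ℝ) * Real.log 2 ≤ Real.log (L + 1) := by
  rcases L.eq_zero_or_pos with rfl | hL
  · simp
  rw [← Real.log_pow]
  refine Real.log_le_log (by positivity) ?_
  exact_mod_cast (Nat.pow_log_le_self 2 hL.ne').trans (Nat.le_succ L)

/-- If `A ∈ SL₂(ℤ)` has `|tr A| > 2`, then `ℤ²` has upper exponential
distortion in `G = ℤ² ⋊_A ℤ`: with respect to the generating set
`{b₁^{±1}, b₂^{±1}, z^{±1}}` of `G` and `{b₁^{±1}, b₂^{±1}}` of `ℤ²`, there is
`c > 0` with `|w|_G ≤ c·log(|w|_{ℤ²} + 1) + c` for all `w ∈ ℤ²`. -/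
theorem z2_upper_exponential_distortion (A : Matrix.SpecialLinearGroup (Fin 2) ℤ)
    (htr : 2 < |Matrix.trace (A : Matrix (Fin 2) (Fin 2) ℤ)|) :
    ∃ c : ℝ, 0 < c ∧ ∀ v : Fin 2 → ℤ,
      (wordLength
          ({bGen A 0, (bGen A 0)⁻¹, bGen A 1, (bGen A 1)⁻¹, zGen A, (zGen A)⁻¹} :
            Set (SolLike A))
          (SemidirectProduct.inl (Multiplicative.ofAdd v)) : ℝ)
        ≤ c * Real.log
            ((wordLength
                ({Multiplicative.ofAdd (Pi.single 0 1),
                  (Multiplicative.ofAdd (Pi.single 0 1))⁻¹,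
                  Multiplicative.ofAdd (Pi.single 1 1),
                  (Multiplicative.ofAdd (Pi.single 1 1))⁻¹} : Set Z2)
                (Multiplicative.ofAdd v) : ℝ) + 1) + c := by
  set K : ℕ := 4 * (Matrix.trace (↑(A ^ 2) : Matrix (Fin 2) (Fin 2) ℤ)).natAbs + 18
  have hlog2 : 0 < Real.log 2 := Real.log_pos one_lt_two
  refine ⟨K / Real.log 2 + K, by positivity, fun v => ?_⟩
  set L := wordLength z2Gens (ofAdd v)
  have hword : (wordLength (solGens A) (inl (ofAdd v)) : ℝ) ≤ K * (Nat.log 2 L + 1) := by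
    exact_mod_cast wordLength_solGens_inl_le A htr v
  have hlog : K * (Nat.log 2 L : ℝ) ≤ K / Real.log 2 * Real.log (L + 1) := by
    rw [div_mul_eq_mul_div, le_div_iff₀ hlog2, mul_assoc]
    exact mul_le_mul_of_nonneg_left (natLog_two_mul_log_two_le_log_succ L) (Nat.cast_nonneg K)
  have hK : 0 ≤ (K : ℝ) / Real.log 2 := by positivity
  have hKlog : 0 ≤ (K : ℝ) * Real.log (L + 1) :=
    mul_nonneg (Nat.cast_nonneg K) (Real.log_nonneg (by simp))
  change (wordLength (solGens A) (inl (ofAdd v)) : ℝ) ≤ _ * Real.log (L + 1) + _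
  linarith
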